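/- For all record types ρ₁, ρ₂ ∈ 𝕋_R: ρ₁+ρ₂ = ρ₁∩ρ₂ if and only if ρ₁+ρ₂ ≤ ρ₁. -/
import Mathlib


/-- Intersection and record types `𝕋`. Record types are the types satisfying `IsRec`. -/
inductive Ty where
  | const : Nat → Ty
  | omega : Ty
  | arrow : Ty → Ty → Ty
  | inter : Ty → Ty → Ty
  | empty : Ty
  | fld : Nat → Ty → Ty
  | merge : Ty → Ty → Ty
deriving DecidableEq

/-- The record types `𝕋_R ⊆ 𝕋`. -/
inductive IsRec : Ty → Prop where
  | empty : IsRec .empty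
  | fld (l : Nat) (σ : Ty) : IsRec (.fld l σ)
  | merge {ρ₁ ρ₂ : Ty} : IsRec ρ₁ → IsRec ρ₂ → IsRec (.merge ρ₁ ρ₂)
  | inter {ρ₁ ρ₂ : Ty} : IsRec ρ₁ → IsRec ρ₂ → IsRec (.inter ρ₁ ρ₂)

/-- Subtyping on `𝕋`: the least preorder satisfying the BCD axioms together with
the record and record-merge axioms. -/
inductive TySub : Ty → Ty → Prop where
  | refl (σ : Ty) : TySub σ σ
  | trans {σ τ υ : Ty} : TySub σ τ → TySub τ υ → TySub σ υ
  | le_omega (σ : Ty) : TySub σ .omega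
  | omega_arrow : TySub .omega (.arrow .omega .omega)
  | inter_left (σ τ : Ty) : TySub (.inter σ τ) σ
  | inter_right (σ τ : Ty) : TySub (.inter σ τ) τ
  | le_inter {σ τ₁ τ₂ : Ty} : TySub σ τ₁ → TySub σ τ₂ → TySub σ (.inter τ₁ τ₂)
  | arrow_inter (σ τ₁ τ₂ : Ty) :
      TySub (.inter (.arrow σ τ₁) (.arrow σ τ₂)) (.arrow σ (.inter τ₁ τ₂))
  | arrow_mono {σ₁ σ₂ τ₁ τ₂ : Ty} : TySub σ₂ σ₁ → TySub τ₁ τ₂ →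
      TySub (.arrow σ₁ τ₁) (.arrow σ₂ τ₂)
  | fld_empty (l : Nat) (σ : Ty) : TySub (.fld l σ) .empty
  | fld_inter (l : Nat) (σ τ : Ty) :
      TySub (.inter (.fld l σ) (.fld l τ)) (.fld l (.inter σ τ))
  | fld_mono {σ τ : Ty} (l : Nat) : TySub σ τ → TySub (.fld l σ) (.fld l τ)
  | merge_empty_r {ρ : Ty} : IsRec ρ → TySub (.merge ρ .empty) ρ
  | merge_empty_r' {ρ : Ty} : IsRec ρ → TySub ρ (.merge ρ .empty)
  | merge_empty_l {ρ : Ty} : IsRec ρ → TySub (.merge .empty ρ) ρ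
  | merge_empty_l' {ρ : Ty} : IsRec ρ → TySub ρ (.merge .empty ρ)
  | merge_assoc {ρ₁ ρ₂ ρ₃ : Ty} : IsRec ρ₁ → IsRec ρ₂ → IsRec ρ₃ →
      TySub (.merge (.merge ρ₁ ρ₂) ρ₃) (.merge ρ₁ (.merge ρ₂ ρ₃))
  | merge_assoc' {ρ₁ ρ₂ ρ₃ : Ty} : IsRec ρ₁ → IsRec ρ₂ → IsRec ρ₃ →
      TySub (.merge ρ₁ (.merge ρ₂ ρ₃)) (.merge (.merge ρ₁ ρ₂) ρ₃)
  | merge_inter {ρ₁ ρ₂ ρ₃ : Ty} : IsRec ρ₁ → IsRec ρ₂ → IsRec ρ₃ →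
      TySub (.merge (.inter ρ₁ ρ₂) ρ₃) (.inter (.merge ρ₁ ρ₃) (.merge ρ₂ ρ₃))
  | merge_inter' {ρ₁ ρ₂ ρ₃ : Ty} : IsRec ρ₁ → IsRec ρ₂ → IsRec ρ₃ →
      TySub (.inter (.merge ρ₁ ρ₃) (.merge ρ₂ ρ₃)) (.merge (.inter ρ₁ ρ₂) ρ₃)
  | fld_absorb {ρ : Ty} (l : Nat) (σ τ : Ty) : IsRec ρ →
      TySub (.merge (.fld l σ) (.inter (.fld l τ) ρ)) (.inter (.fld l τ) ρ)
  | fld_absorb' {ρ : Ty} (l : Nat) (σ τ : Ty) : IsRec ρ →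
      TySub (.inter (.fld l τ) ρ) (.merge (.fld l σ) (.inter (.fld l τ) ρ))
  | fld_comm {ρ : Ty} {l l' : Nat} (σ τ : Ty) : l ≠ l' → IsRec ρ →
      TySub (.merge (.fld l σ) (.inter (.fld l' τ) ρ))
          (.inter (.fld l' τ) (.merge (.fld l σ) ρ))
  | fld_comm' {ρ : Ty} {l l' : Nat} (σ τ : Ty) : l ≠ l' → IsRec ρ →
      TySub (.inter (.fld l' τ) (.merge (.fld l σ) ρ))
          (.merge (.fld l σ) (.inter (.fld l' τ) ρ))
  | merge_mono_l {ρ₁ ρ₂ ρ : Ty} : IsRec ρ₁ → IsRec ρ₂ → IsRec ρ →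
      TySub ρ₁ ρ₂ → TySub (.merge ρ₁ ρ) (.merge ρ₂ ρ)
  | merge_congr_r {ρ ρ₁ ρ₂ : Ty} : IsRec ρ → IsRec ρ₁ → IsRec ρ₂ →
      TySub ρ₁ ρ₂ → TySub ρ₂ ρ₁ → TySub (.merge ρ ρ₁) (.merge ρ ρ₂)

/-- Type equality: mutual subtyping. -/
def TyEq (σ τ : Ty) : Prop := TySub σ τ ∧ TySub τ σ

namespace MergeAux

/-- Turn an association list into a record type (intersection of fields, ending in `empty`). -/
def toTy : List (Nat × Ty) → Ty
  | [] => .empty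
  | p :: rest => .inter (.fld p.1 p.2) (toTy rest)

/-- Right-biased merge of association lists. -/
def mergeL : List (Nat × Ty) → List (Nat × Ty) → List (Nat × Ty)
  | [], ys => ys
  | p :: rest, ys =>
      if p.1 ∈ ys.map Prod.fst then mergeL rest ys else p :: mergeL rest ys

/-- Normal form of a record type. -/
def norm : Ty → List (Nat × Ty)
  | .empty => []
  | .fld l σ => [(l, σ)]
  | .inter a b => norm a ++ norm b
  | .merge a b => mergeL (norm a) (norm b)
  | _ => []

lemma isRec_toTy (xs : List (Nat × Ty)) : IsRec (toTy xs) := by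
  induction xs with
  | nil => exact .empty
  | cons p rest ih => exact .inter (.fld _ _) ih

lemma rec_le_empty {ρ : Ty} (h : IsRec ρ) : TySub ρ .empty := by
  induction h with
  | empty => exact .refl _
  | fld l σ => exact .fld_empty l σ
  | merge h1 h2 ih1 ih2 =>
      exact ((TySub.merge_mono_l h1 .empty h2 ih1).trans (.merge_empty_l h2)).trans ih2
  | inter h1 h2 ih1 ih2 => exact (TySub.inter_left _ _).trans ih1

lemma merge_le_right {ρ₁ ρ₂ : Ty} (h1 : IsRec ρ₁) (h2 : IsRec ρ₂) :
    TySub (.merge ρ₁ ρ₂) ρ₂ :=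
  (TySub.merge_mono_l h1 .empty h2 (rec_le_empty h1)).trans (.merge_empty_l h2)

lemma tyEq_refl {a : Ty} : TyEq a a := ⟨.refl _, .refl _⟩
lemma tyEq_symm {a b : Ty} (h : TyEq a b) : TyEq b a := ⟨h.2, h.1⟩
lemma tyEq_trans {a b c : Ty} (h1 : TyEq a b) (h2 : TyEq b c) : TyEq a c :=
  ⟨h1.1.trans h2.1, h2.2.trans h1.2⟩

lemma inter_le_inter {a a' b b' : Ty} (h1 : TySub a a') (h2 : TySub b b') :
    TySub (.inter a b) (.inter a' b') :=
  .le_inter ((TySub.inter_left _ _).trans h1) ((TySub.inter_right _ _).trans h2)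

lemma tyEq_inter {a a' b b' : Ty} (h1 : TyEq a a') (h2 : TyEq b b') :
    TyEq (.inter a b) (.inter a' b') :=
  ⟨inter_le_inter h1.1 h2.1, inter_le_inter h1.2 h2.2⟩

lemma tyEq_merge {a a' b b' : Ty} (ra : IsRec a) (ra' : IsRec a') (rb : IsRec b)
    (rb' : IsRec b') (h1 : TyEq a a') (h2 : TyEq b b') :
    TyEq (.merge a b) (.merge a' b') :=
  ⟨(TySub.merge_mono_l ra ra' rb h1.1).trans (.merge_congr_r ra' rb rb' h2.1 h2.2),
   (TySub.merge_mono_l ra' ra rb' h1.2).trans (.merge_congr_r ra rb' rb h2.2 h2.1)⟩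

lemma toTy_mem {p : Nat × Ty} {xs : List (Nat × Ty)} (h : p ∈ xs) :
    TySub (toTy xs) (.fld p.1 p.2) := by
  induction xs with
  | nil => cases h
  | cons q rest ih =>
    rcases List.mem_cons.mp h with h | h
    · subst h; exact .inter_left _ _
    · exact (TySub.inter_right _ _).trans (ih h)

lemma toTy_subset {zs ws : List (Nat × Ty)} (h : ∀ p ∈ zs, p ∈ ws) :
    TySub (toTy ws) (toTy zs) := by
  induction zs with
  | nil => exact rec_le_empty (isRec_toTy ws)
  | cons p rest ih =>
    exact .le_inter (toTy_mem (h p (.head _))) (ih fun q hq => h q (.tail _ hq))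

lemma inter_toTy_subset {zs xs ys : List (Nat × Ty)} (h : ∀ p ∈ zs, p ∈ xs ∨ p ∈ ys) :
    TySub (.inter (toTy xs) (toTy ys)) (toTy zs) := by
  induction zs with
  | nil => exact (TySub.inter_left _ _).trans (rec_le_empty (isRec_toTy xs))
  | cons p rest ih =>
    refine .le_inter ?_ (ih fun q hq => h q (.tail _ hq))
    rcases h p (.head _) with h' | h'
    · exact (TySub.inter_left _ _).trans (toTy_mem h')
    · exact (TySub.inter_right _ _).trans (toTy_mem h')

lemma mem_mergeL {p : Nat × Ty} {xs ys : List (Nat × Ty)} (h : p ∈ mergeL xs ys) :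
    p ∈ xs ∨ p ∈ ys := by
  induction xs with
  | nil => exact Or.inr h
  | cons q rest ih =>
    unfold mergeL at h
    split at h
    · rcases ih h with h | h
      · exact Or.inl (.tail _ h)
      · exact Or.inr h
    · rcases List.mem_cons.mp h with h | h
      · subst h; exact Or.inl (.head _)
      · rcases ih h with h | h
        · exact Or.inl (.tail _ h)
        · exact Or.inr h

lemma subset_mergeL {p : Nat × Ty} {xs ys : List (Nat × Ty)} (h : p ∈ ys) :
    p ∈ mergeL xs ys := by
  induction xs with
  | nil => exact h
  | cons q rest ih =>
    unfold mergeL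
    split
    · exact ih
    · exact .tail _ ih

lemma tyEq_append (xs ys : List (Nat × Ty)) :
    TyEq (.inter (toTy xs) (toTy ys)) (toTy (xs ++ ys)) := by
  refine ⟨inter_toTy_subset fun p hp => List.mem_append.mp hp, ?_⟩
  exact .le_inter (toTy_subset fun p hp => List.mem_append.mpr (Or.inl hp))
    (toTy_subset fun p hp => List.mem_append.mpr (Or.inr hp))

lemma tyEq_fld_single (l : Nat) (σ : Ty) : TyEq (.fld l σ) (toTy [(l, σ)]) :=
  ⟨.le_inter (.refl _) (.fld_empty l σ), .inter_left _ _⟩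

lemma merge_fld (l : Nat) (σ : Ty) (ys : List (Nat × Ty)) :
    TyEq (.merge (.fld l σ) (toTy ys))
      (toTy (if l ∈ ys.map Prod.fst then ys else (l, σ) :: ys)) := by
  induction ys with
  | nil =>
    simp only [List.map_nil, List.not_mem_nil, if_false]
    exact tyEq_trans ⟨.merge_empty_r (.fld l σ), .merge_empty_r' (.fld l σ)⟩
      (tyEq_fld_single l σ)
  | cons q rest ih =>
    by_cases hl : l = q.1
    · subst hl
      simp only [List.map_cons, List.mem_cons, true_or, if_true]
      exact ⟨.fld_absorb q.1 σ q.2 (isRec_toTy rest), .fld_absorb' q.1 σ q.2 (isRec_toTy rest)⟩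
    · have step1 : TyEq (.merge (.fld l σ) (toTy (q :: rest)))
          (.inter (.fld q.1 q.2) (.merge (.fld l σ) (toTy rest))) :=
        ⟨.fld_comm σ q.2 hl (isRec_toTy rest), .fld_comm' σ q.2 hl (isRec_toTy rest)⟩
      refine tyEq_trans step1 (tyEq_trans (tyEq_inter tyEq_refl ih) ?_)
      by_cases hr : l ∈ rest.map Prod.fst
      · have e1 : (if l ∈ (q :: rest).map Prod.fst then q :: rest else (l, σ) :: q :: rest)
            = q :: rest := by simp [hr]
        have e2 : (if l ∈ rest.map Prod.fst then rest else (l, σ) :: rest) = rest := by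
          simp [hr]
        rw [e1, e2]; exact tyEq_refl
      · have e1 : (if l ∈ (q :: rest).map Prod.fst then q :: rest else (l, σ) :: q :: rest)
            = (l, σ) :: q :: rest := by simp [hl, hr]
        have e2 : (if l ∈ rest.map Prod.fst then rest else (l, σ) :: rest)
            = (l, σ) :: rest := by simp [hr]
        rw [e1, e2]
        -- swap the two outer fields
        constructor
        · exact .le_inter ((TySub.inter_right _ _).trans (.inter_left _ _))
            (.le_inter (.inter_left _ _) ((TySub.inter_right _ _).trans (.inter_right _ _)))
        · exact .le_inter ((TySub.inter_right _ _).trans (.inter_left _ _))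
            (.le_inter (.inter_left _ _) ((TySub.inter_right _ _).trans (.inter_right _ _)))

lemma merge_toTy (xs ys : List (Nat × Ty)) :
    TyEq (.merge (toTy xs) (toTy ys)) (toTy (mergeL xs ys)) := by
  induction xs with
  | nil => exact ⟨.merge_empty_l (isRec_toTy ys), .merge_empty_l' (isRec_toTy ys)⟩
  | cons p rest ih =>
    have step1 : TyEq (.merge (toTy (p :: rest)) (toTy ys))
        (.inter (.merge (.fld p.1 p.2) (toTy ys)) (.merge (toTy rest) (toTy ys))) :=
      ⟨.merge_inter (.fld _ _) (isRec_toTy rest) (isRec_toTy ys),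
       .merge_inter' (.fld _ _) (isRec_toTy rest) (isRec_toTy ys)⟩
    refine tyEq_trans step1 (tyEq_trans (tyEq_inter (merge_fld p.1 p.2 ys) ih) ?_)
    have hL : mergeL (p :: rest) ys
        = if p.1 ∈ ys.map Prod.fst then mergeL rest ys else p :: mergeL rest ys := rfl
    rw [hL]
    by_cases hm : p.1 ∈ ys.map Prod.fst
    · rw [if_pos hm, if_pos hm]
      refine ⟨.inter_right _ _, .le_inter (toTy_subset fun q hq => subset_mergeL hq) (.refl _)⟩
    · rw [if_neg hm, if_neg hm]
      constructor
      · exact .le_inter ((TySub.inter_left _ _).trans (.inter_left _ _)) (.inter_right _ _)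
      · exact .le_inter
          (.le_inter (.inter_left _ _)
            ((TySub.inter_right _ _).trans (toTy_subset fun q hq => subset_mergeL hq)))
          (.inter_right _ _)

lemma norm_eq {ρ : Ty} (h : IsRec ρ) : TyEq ρ (toTy (norm ρ)) := by
  induction h with
  | empty => exact tyEq_refl
  | fld l σ => exact tyEq_fld_single l σ
  | inter h1 h2 ih1 ih2 => exact tyEq_trans (tyEq_inter ih1 ih2) (tyEq_append _ _)
  | merge h1 h2 ih1 ih2 =>
    exact tyEq_trans
      (tyEq_merge h1 (isRec_toTy _) h2 (isRec_toTy _) ih1 ih2) (merge_toTy _ _)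

lemma inter_le_merge {ρ₁ ρ₂ : Ty} (h1 : IsRec ρ₁) (h2 : IsRec ρ₂) :
    TySub (.inter ρ₁ ρ₂) (.merge ρ₁ ρ₂) := by
  have e1 := norm_eq h1
  have e2 := norm_eq h2
  have em := merge_toTy (norm ρ₁) (norm ρ₂)
  have emc := tyEq_merge h1 (isRec_toTy _) h2 (isRec_toTy _) e1 e2
  exact ((inter_le_inter e1.1 e2.1).trans
    (inter_toTy_subset fun p hp => mem_mergeL hp)).trans (em.2.trans emc.2)

end MergeAux

/-- `ρ₁ + ρ₂ = ρ₁ ∩ ρ₂` iff `ρ₁ + ρ₂ ≤ ρ₁`. -/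
theorem merge_eq_inter_iff (ρ₁ ρ₂ : Ty) (h₁ : IsRec ρ₁) (h₂ : IsRec ρ₂) :
    TyEq (.merge ρ₁ ρ₂) (.inter ρ₁ ρ₂) ↔ TySub (.merge ρ₁ ρ₂) ρ₁ := by
  constructor
  · intro h
    exact h.1.trans (.inter_left _ _)
  · intro h
    exact ⟨.le_inter h (MergeAux.merge_le_right h₁ h₂), MergeAux.inter_le_merge h₁ h₂⟩
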